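/- Let U ∈ ℝ^{m₁×r} have orthonormal columns, P_U = UU^⊤, and let G ⊆ [m₁]×[m₂] be b-sparse. Define the incoherence constant I(U) = (m₁/r)·max_i ‖e_i^⊤U‖₂². Then for any matrix A ∈ ℝ^{m₁×m₂}, ‖G(P_U A)‖ ≤ √( I(U)·r·b·(b ∧ r) / m₁ ) · ‖A‖. -/

import Mathlib

open scoped Matrix.Norms.L2Operator
open Matrix

/-- `restrict G M` is the matrix `M` with all entries outside the index set `G` set to zero. -/
def Matrix.restrict {m₁ m₂ : ℕ} (G : Finset (Fin m₁ × Fin m₂))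
    (M : Matrix (Fin m₁) (Fin m₂) ℝ) : Matrix (Fin m₁) (Fin m₂) ℝ :=
  fun i j => if (i, j) ∈ G then M i j else 0

/-- `G` is `b`-sparse: every row and every column contains at most `b` indices of `G`. -/
def Matrix.BSparse {m₁ m₂ : ℕ} (G : Finset (Fin m₁ × Fin m₂)) (b : ℕ) : Prop :=
  (∀ i : Fin m₁, (G.filter (fun q => q.1 = i)).card ≤ b) ∧
  (∀ j : Fin m₂, (G.filter (fun q => q.2 = j)).card ≤ b)

/-- The incoherence constant `I(U) = (m/r) maxᵢ ‖eᵢᵀ U‖₂²` of a matrix `U ∈ ℝ^{m×r}`. -/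
noncomputable def Matrix.incoh {m r : ℕ} (U : Matrix (Fin m) (Fin r) ℝ) : ℝ :=
  ((m : ℝ) / r) * ⨆ i : Fin m, ∑ k, (U i k) ^ 2

/-!
Write `x⁽ⁱ⁾` for `x` with the coordinates `j` such that `(i, j) ∉ G` set to zero. Then
`(G(U C) x)ᵢ = ⟨Uᵢ, C x⁽ⁱ⁾⟩`, so by Cauchy–Schwarz its square is at most
`‖Uᵢ‖² ‖C‖² ‖x⁽ⁱ⁾‖²`. Summing over `i`, every `x_j²` is counted once for each `(i, j) ∈ G`,
hence at most `b` times, and `‖G(U C)‖ ≤ √(maxᵢ ‖Uᵢ‖² b) ‖C‖`. Take `C = Uᵀ A`, which has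
`‖C‖ ≤ ‖A‖` since `U` is an isometry, and note `I(U) r / m₁ = maxᵢ ‖Uᵢ‖²` and `b ∧ r ≥ 1`
unless `b = 0` or `r = 0`.
-/

namespace Matrix

section L2OpNorm

variable {𝕜 : Type*} [RCLike 𝕜] {m n : Type*} [Fintype m] [Fintype n] [DecidableEq n]

lemma l2_opNorm_le_one_of_conjTranspose_mul_self_eq_one {U : Matrix m n 𝕜}
    (hU : Uᴴ * U = 1) : ‖U‖ ≤ 1 := by
  have h1 : ‖(1 : Matrix n n 𝕜)‖ ≤ 1 := by
    rw [← diagonal_one, l2_opNorm_diagonal]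
    exact (pi_norm_le_iff_of_nonneg zero_le_one).2 fun _ => by simp
  have hUU := l2_opNorm_conjTranspose_mul_self U
  rw [hU] at hUU
  nlinarith [norm_nonneg U]

lemma l2_opNorm_conjTranspose_mul_le_of_conjTranspose_mul_self_eq_one {l : Type*} [Fintype l]
    [DecidableEq m] [DecidableEq l] {U : Matrix m n 𝕜} (hU : Uᴴ * U = 1) (A : Matrix m l 𝕜) :
    ‖Uᴴ * A‖ ≤ ‖A‖ :=
  calc ‖Uᴴ * A‖ ≤ ‖Uᴴ‖ * ‖A‖ := l2_opNorm_mul _ _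
    _ ≤ ‖A‖ := by
      rw [l2_opNorm_conjTranspose]
      exact mul_le_of_le_one_left (norm_nonneg A)
        (l2_opNorm_le_one_of_conjTranspose_mul_self_eq_one hU)

lemma sum_sq_mulVec_le (A : Matrix m n ℝ) (x : n → ℝ) :
    ∑ i, (A *ᵥ x) i ^ 2 ≤ ‖A‖ ^ 2 * ∑ j, x j ^ 2 := by
  have h := A.l2_opNorm_mulVec (WithLp.toLp 2 x)
  rw [← pow_le_pow_iff_left₀ (norm_nonneg _) (by positivity) two_ne_zero, mul_pow,
    EuclideanSpace.real_norm_sq_eq, EuclideanSpace.real_norm_sq_eq] at h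
  exact h

lemma l2_opNorm_le_of_sum_sq_mulVec_le {A : Matrix m n ℝ} {c : ℝ} (hc : 0 ≤ c)
    (h : ∀ x : n → ℝ, ∑ i, (A *ᵥ x) i ^ 2 ≤ c ^ 2 * ∑ j, x j ^ 2) : ‖A‖ ≤ c := by
  rw [l2_opNorm_def]
  refine ContinuousLinearMap.opNorm_le_bound _ hc fun x => ?_
  rw [← pow_le_pow_iff_left₀ (norm_nonneg _) (by positivity) two_ne_zero, mul_pow,
    EuclideanSpace.real_norm_sq_eq, EuclideanSpace.real_norm_sq_eq]
  exact h x

end L2OpNorm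

section Restrict

variable {m₁ m₂ r : ℕ}

def maskRow (G : Finset (Fin m₁ × Fin m₂)) (i : Fin m₁) (x : Fin m₂ → ℝ) : Fin m₂ → ℝ :=
  fun j => if (i, j) ∈ G then x j else 0

lemma restrict_mulVec_apply (G : Finset (Fin m₁ × Fin m₂)) (M : Matrix (Fin m₁) (Fin m₂) ℝ)
    (x : Fin m₂ → ℝ) (i : Fin m₁) : (restrict G M *ᵥ x) i = (M *ᵥ maskRow G i x) i := by
  simp only [mulVec, dotProduct, restrict, maskRow, mul_ite, ite_mul, mul_zero, zero_mul]

lemma sum_sum_maskRow_sq_le {G : Finset (Fin m₁ × Fin m₂)} {b : ℕ}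
    (hG : ∀ j, (G.filter (fun q => q.2 = j)).card ≤ b) (x : Fin m₂ → ℝ) :
    ∑ i, ∑ j, maskRow G i x j ^ 2 ≤ b * ∑ j, x j ^ 2 := by
  calc ∑ i, ∑ j, maskRow G i x j ^ 2
      = ∑ q ∈ G, x q.2 ^ 2 := by
        simp only [maskRow, ite_pow, ne_eq, OfNat.ofNat_ne_zero, not_false_eq_true, zero_pow,
          ← Fintype.sum_prod_type', Finset.sum_ite_mem, Finset.univ_inter]
    _ = ∑ j, ∑ q ∈ G.filter (fun q => q.2 = j), x j ^ 2 := by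
        rw [← Finset.sum_fiberwise_of_maps_to (fun q _ => Finset.mem_univ q.2)]
        exact Finset.sum_congr rfl fun j _ => Finset.sum_congr rfl fun q hq =>
          by rw [(Finset.mem_filter.mp hq).2]
    _ ≤ ∑ j, (b : ℝ) * x j ^ 2 := by
        gcongr with j
        rw [Finset.sum_const, nsmul_eq_mul]
        gcongr
        exact_mod_cast hG j
    _ = b * ∑ j, x j ^ 2 := (Finset.mul_sum _ _ _).symm

lemma l2_opNorm_restrict_mul_le {G : Finset (Fin m₁ × Fin m₂)} {b : ℕ}
    (hG : ∀ j, (G.filter (fun q => q.2 = j)).card ≤ b) {U : Matrix (Fin m₁) (Fin r) ℝ} {μ : ℝ}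
    (hμ : 0 ≤ μ) (hU : ∀ i, ∑ k, U i k ^ 2 ≤ μ) (C : Matrix (Fin r) (Fin m₂) ℝ) :
    ‖restrict G (U * C)‖ ≤ √(μ * b) * ‖C‖ := by
  refine l2_opNorm_le_of_sum_sq_mulVec_le (by positivity) fun x => ?_
  have hrow : ∀ i, (restrict G (U * C) *ᵥ x) i ^ 2 ≤
      μ * (‖C‖ ^ 2 * ∑ j, maskRow G i x j ^ 2) := fun i => by
    rw [restrict_mulVec_apply, ← mulVec_mulVec]
    calc (∑ k, U i k * (C *ᵥ maskRow G i x) k) ^ 2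
        ≤ (∑ k, U i k ^ 2) * ∑ k, (C *ᵥ maskRow G i x) k ^ 2 :=
          Finset.sum_mul_sq_le_sq_mul_sq _ _ _
      _ ≤ μ * (‖C‖ ^ 2 * ∑ j, maskRow G i x j ^ 2) :=
          mul_le_mul (hU i) (sum_sq_mulVec_le C _) (by positivity) hμ
  calc ∑ i, (restrict G (U * C) *ᵥ x) i ^ 2
      ≤ ∑ i, μ * (‖C‖ ^ 2 * ∑ j, maskRow G i x j ^ 2) := Finset.sum_le_sum fun i _ => hrow i
    _ = μ * ‖C‖ ^ 2 * ∑ i, ∑ j, maskRow G i x j ^ 2 := by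
        rw [Finset.mul_sum]; simp only [mul_assoc]
    _ ≤ μ * ‖C‖ ^ 2 * (b * ∑ j, x j ^ 2) := by gcongr; exact sum_sum_maskRow_sq_le hG x
    _ = (√(μ * b) * ‖C‖) ^ 2 * ∑ j, x j ^ 2 := by
        rw [mul_pow, Real.sq_sqrt (by positivity)]; ring

end Restrict

/- Also for `r = 0` or `m = 0`: both sides are then `0`, by `x / 0 = 0` and `⨆` over the
empty type being `0`. -/
lemma incoh_mul_div_eq_iSup {m r : ℕ} (U : Matrix (Fin m) (Fin r) ℝ) :
    incoh U * r / m = ⨆ i, ∑ k, U i k ^ 2 := by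
  rcases Nat.eq_zero_or_pos r with rfl | _
  · simp
  rcases Nat.eq_zero_or_pos m with rfl | _
  · simp
  rw [incoh]
  field_simp

lemma iSup_sum_sq_mul_le_incoh {m r : ℕ} (U : Matrix (Fin m) (Fin r) ℝ) (b : ℕ) :
    (⨆ i, ∑ k, U i k ^ 2) * b ≤ incoh U * r * b * min b r / m := by
  rw [mul_div_right_comm, mul_div_right_comm, incoh_mul_div_eq_iSup]
  rcases Nat.eq_zero_or_pos r with rfl | hr
  · simp
  rcases Nat.eq_zero_or_pos b with rfl | hb
  · simp
  exact le_mul_of_one_le_right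
    (mul_nonneg (Real.iSup_nonneg fun i => by positivity) b.cast_nonneg)
    (by exact_mod_cast le_min hb hr)

end Matrix

/-- If `U ∈ 𝕆_{m₁,r}` has orthonormal columns with incoherence `I(U)` and the index set `G`
is `b`-sparse, then for every `A`, `‖G(P_U A)‖ ≤ √(I(U)·r·b·(b∧r)/m₁) ‖A‖`,
where `P_U = UUᵀ`. -/
theorem restrict_proj_l2OpNorm_le {m₁ m₂ r b : ℕ}
    (U : Matrix (Fin m₁) (Fin r) ℝ) (hU : Uᵀ * U = 1)
    (G : Finset (Fin m₁ × Fin m₂)) (hG : Matrix.BSparse G b)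
    (A : Matrix (Fin m₁) (Fin m₂) ℝ) :
    ‖Matrix.restrict G (U * Uᵀ * A)‖ ≤
      Real.sqrt (Matrix.incoh U * r * b * (min b r) / m₁) * ‖A‖ := by
  rw [← conjTranspose_eq_transpose_of_trivial] at hU ⊢
  have hrow : ∀ i, ∑ k, U i k ^ 2 ≤ ⨆ i, ∑ k, U i k ^ 2 :=
    le_ciSup (f := fun i => ∑ k, U i k ^ 2) (Set.finite_range _).bddAbove
  calc ‖Matrix.restrict G (U * Uᴴ * A)‖ = ‖Matrix.restrict G (U * (Uᴴ * A))‖ := by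
        rw [Matrix.mul_assoc]
    _ ≤ √((⨆ i, ∑ k, U i k ^ 2) * b) * ‖Uᴴ * A‖ :=
        l2_opNorm_restrict_mul_le hG.2 (Real.iSup_nonneg fun i => by positivity) hrow _
    _ ≤ _ := by
        gcongr
        · exact iSup_sum_sq_mul_le_incoh U b
        · exact l2_opNorm_conjTranspose_mul_le_of_conjTranspose_mul_self_eq_one hU A
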